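/- arXiv:2111.01435 — 2 statements merged into one kernel-verified Lean document; each statement's English description precedes it below -/
import Mathlib

section
/- Let 1 ≤ q < 2 and let ω ∈ L^∞(ℝ²₊) ∩ L^q(ℝ²₊). Define Ψ(x) = (1/2π) ∫_{ℝ²₊} (log|x−y| − log|x−ȳ|) ω(y) dy for x ∈ ℝ²₊. Then there exist constants C_q (depending only on q) and an absolute constant C such that for every R > 0 and every x ∈ ℝ²₊ with |x| ≤ R, |Ψ(x)| ≤ C_q (R + R²) ‖ω‖_{L^q(ℝ²₊)} + C (1 + log(1 + 4R)) ‖ω‖_{L^∞(ℝ²₊)}. -/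
open MeasureTheory Real Filter
open scoped ENNReal NNReal Topology

noncomputable section

/-- Points of the plane, with the Euclidean norm. -/
abbrev Pt := EuclideanSpace ℝ (Fin 2)

/-- The (open) upper half plane `ℝ²₊ = {x : x₂ > 0}`. -/
def UHP : Set Pt := {x | 0 < x 1}

/-- Lebesgue measure restricted to the upper half plane. -/
def μH : Measure Pt := volume.restrict UHP

/-- `z^⊥ = (z₂, -z₁)`. -/
def perp (z : Pt) : Pt := (WithLp.equiv 2 (Fin 2 → ℝ)).symm ![z 1, -(z 0)]

/-- `z̄ = (z₁, -z₂)`. -/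
def reflv (z : Pt) : Pt := (WithLp.equiv 2 (Fin 2 → ℝ)).symm ![z 0, -(z 1)]

/-- The half-plane Biot–Savart kernel
`K(x,y) = (1/2π) ((x-y)^⊥/|x-y|² - (x-ȳ)^⊥/|x-ȳ|²)`. -/
def bsK (x y : Pt) : Pt :=
  (2 * π)⁻¹ • ((‖x - y‖ ^ 2)⁻¹ • perp (x - y) - (‖x - reflv y‖ ^ 2)⁻¹ • perp (x - reflv y))

/-- The velocity obtained from a vorticity `w` via the half-plane Biot–Savart law. -/
def bs (w : Pt → ℝ) (x : Pt) : Pt := ∫ y in UHP, w y • bsK x y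

/-- The `W^{k,p}(ℝ²₊)` (extended-real valued) norm: the sum of the `Lᵖ` norms on the
half plane of the derivatives of order `≤ k`. -/
def sobNorm {E : Type*} [NormedAddCommGroup E] [NormedSpace ℝ E]
    (k : ℕ) (p : ℝ≥0∞) (f : Pt → E) : ℝ≥0∞ :=
  ∑ i ∈ Finset.range (k + 1), eLpNorm (iteratedFDerivWithin ℝ i f UHP) p μH

/-- Membership in `W^{k,p}(ℝ²₊)` (classical modelling: `f` is `C^k` on the half plane and
all its derivatives of order `≤ k` belong to `Lᵖ(ℝ²₊)`). -/
def MemSob (k : ℕ) (p : ℝ≥0∞) (f : Pt → ℝ) : Prop :=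
  ContDiffOn ℝ k f UHP ∧
    ∀ i ≤ k, MemLp (iteratedFDerivWithin ℝ i f UHP) p μH

/-- `θ` solves the transport equation `∂ₜθ + u·∇θ = 0` on the time set `s`, where the
velocity `u` is obtained from the vorticity `ω` by the half-plane Biot–Savart law. -/
def IsTransportSol (s : Set ℝ) (ω θ : ℝ → Pt → ℝ) : Prop :=
  ∀ t ∈ s, ∀ x ∈ UHP,
    HasDerivWithinAt (fun τ => θ τ x)
      (-(fderivWithin ℝ (θ t) UHP x (bs (ω t) x))) s t

/-- `ω` solves the two-dimensional incompressible vorticity equation on the half plane,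
for times in `s`. -/
def IsVortSol (s : Set ℝ) (ω : ℝ → Pt → ℝ) : Prop := IsTransportSol s ω ω

/-- `ω` is smooth (jointly in time and space) on `s × ℝ²₊`. -/
def SmoothSolOn (s : Set ℝ) (ω : ℝ → Pt → ℝ) : Prop :=
  ContDiffOn ℝ (⊤ : ℕ∞) (fun q : ℝ × Pt => ω q.1 q.2) (s ×ˢ UHP)

/-- Continuity in time with respect to a norm `Nrm` on functions on the half plane. -/
def ContInNorm (s : Set ℝ) (Nrm : (Pt → ℝ) → ℝ≥0∞) (ω : ℝ → Pt → ℝ) : Prop :=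
  ∀ t ∈ s, ∀ ε : ℝ, 0 < ε → ∃ δ > 0, ∀ t' ∈ s, |t' - t| < δ →
    Nrm (fun x => ω t' x - ω t x) < ENNReal.ofReal ε

/-- Lipschitz continuity in time with respect to a norm `Nrm`. -/
def LipInNorm (s : Set ℝ) (Nrm : (Pt → ℝ) → ℝ≥0∞) (ω : ℝ → Pt → ℝ) : Prop :=
  ∃ L : ℝ, ∀ t ∈ s, ∀ t' ∈ s,
    Nrm (fun x => ω t x - ω t' x) ≤ ENNReal.ofReal (L * |t - t'|)

/-- `ω ∈ L^∞(s; W^{k,p}(ℝ²₊))`. -/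
def BddInSob (k : ℕ) (p : ℝ≥0∞) (s : Set ℝ) (ω : ℝ → Pt → ℝ) : Prop :=
  (∀ t ∈ s, MemSob k p (ω t)) ∧ ∃ M : ℝ≥0∞, M < ⊤ ∧ ∀ t ∈ s, sobNorm k p (ω t) ≤ M

/-- `ω` is a solution of the vorticity equation on `[0,T]` in `C([0,T]; W^{k,p}(ℝ²₊))`
with initial value `ω₀`. -/
def SolOn (k : ℕ) (p : ℝ≥0∞) (T : ℝ) (ω₀ : Pt → ℝ) (ω : ℝ → Pt → ℝ) : Prop :=
  Set.EqOn (ω 0) ω₀ UHP ∧ IsVortSol (Set.Icc 0 T) ω ∧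
    (∀ t ∈ Set.Icc (0 : ℝ) T, MemSob k p (ω t)) ∧
    ContInNorm (Set.Icc 0 T) (fun f => sobNorm k p f) ω

/-- The Hölder seminorm `[f]_{C^γ(s)}`, valued in `ℝ≥0∞`. -/
def holSemi {E : Type*} [NormedAddCommGroup E] (γ : ℝ) (s : Set Pt) (f : Pt → E) : ℝ≥0∞ :=
  ⨆ x ∈ s, ⨆ y ∈ s, ENNReal.ofReal (‖f x - f y‖ / ‖x - y‖ ^ γ)

/-- The `W^{1,∞}(ℝ²₊)` norm of a velocity field: `‖u‖_∞ + ‖∇u‖_∞`. -/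
def W1inf (u : Pt → Pt) : ℝ≥0∞ :=
  eLpNorm u ⊤ μH + eLpNorm (fderivWithin ℝ u UHP) ⊤ μH

/-- `‖∇f‖_{L^∞(ℝ²₊)}` for a scalar function `f`. -/
def supGrad (f : Pt → ℝ) : ℝ≥0∞ := eLpNorm (fderivWithin ℝ f UHP) ⊤ μH

/-- The stream function of a vorticity on the half plane, given by the Green function
of the Dirichlet Laplacian: `Ψ(x) = (1/2π) ∫ (log|x-y| - log|x-ȳ|) ω(y) dy`. -/
def streamFn (w : Pt → ℝ) (x : Pt) : ℝ :=
  (2 * π)⁻¹ * ∫ y in UHP, (Real.log ‖x - y‖ - Real.log ‖x - reflv y‖) * w y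

/-- Partial derivative in the `i`-th coordinate direction. -/
def pd (i : Fin 2) (f : Pt → ℝ) (x : Pt) : ℝ := fderiv ℝ f x (EuclideanSpace.single i 1)

/-- `u = ∇^⊥Ψ = (∂₂Ψ, -∂₁Ψ)` from the stream function of `w`. -/
def velFromStream (w : Pt → ℝ) (x : Pt) : Pt :=
  (WithLp.equiv 2 (Fin 2 → ℝ)).symm ![pd 1 (streamFn w) x, -(pd 0 (streamFn w) x)]



/-! ### Auxiliary lemmas for the stream function estimate -/

section streamAux
open Metric

lemma pt_norm_sq (v : Pt) : ‖v‖ ^ 2 = v 0 ^ 2 + v 1 ^ 2 := by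
  rw [EuclideanSpace.norm_eq, Real.sq_sqrt (by positivity)]
  simp [Fin.sum_univ_two, sq_abs]

lemma reflv_apply0 (y : Pt) : reflv y 0 = y 0 := rfl
lemma reflv_apply1 (y : Pt) : reflv y 1 = -(y 1) := rfl
lemma pt_sub_apply (x y : Pt) (i : Fin 2) : (x - y) i = x i - y i := rfl

lemma sub_reflv_sq (x y : Pt) : ‖x - reflv y‖ ^ 2 = ‖x - y‖ ^ 2 + 4 * (x 1 * y 1) := by
  rw [pt_norm_sq, pt_norm_sq, pt_sub_apply, pt_sub_apply, pt_sub_apply, pt_sub_apply,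
    reflv_apply0, reflv_apply1]
  ring

lemma norm_reflv (y : Pt) : ‖reflv y‖ = ‖y‖ := by
  have h1 : ‖reflv y‖ ^ 2 = ‖y‖ ^ 2 := by
    rw [pt_norm_sq, pt_norm_sq, reflv_apply0, reflv_apply1]; ring
  nlinarith [norm_nonneg (reflv y), norm_nonneg y]

lemma coord_le_norm (v : Pt) (i : Fin 2) : v i ≤ ‖v‖ := by
  have := pt_norm_sq v
  fin_cases i <;> simp only [Fin.zero_eta, Fin.mk_one] <;>
    nlinarith [norm_nonneg v, sq_nonneg (v 0), sq_nonneg (v 1)]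

variable {x y : Pt} {R : ℝ}

lemma s_pos (hx : 0 < x 1) (hy : 0 < y 1) : 0 < ‖x - reflv y‖ := by
  have h := sub_reflv_sq x y
  nlinarith [norm_nonneg (x - reflv y), norm_nonneg (x - y), sq_nonneg (‖x - y‖)]

lemma r_le_s (hx : 0 < x 1) (hy : 0 < y 1) : ‖x - y‖ ≤ ‖x - reflv y‖ := by
  have h := sub_reflv_sq x y
  nlinarith [norm_nonneg (x - reflv y), norm_nonneg (x - y)]

lemma ker_near (hx : 0 < x 1) (hy : 0 < y 1) (hxy : y ≠ x) (hR : ‖x‖ ≤ R) (hR0 : 0 < R)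
    (h1 : ‖x - y‖ ≤ 1) :
    |Real.log ‖x - y‖ - Real.log ‖x - reflv y‖| ≤ Real.log (1 + 4 * R) + -Real.log ‖x - y‖ := by
  have hr : 0 < ‖x - y‖ := by
    rw [norm_pos_iff, sub_ne_zero]; exact fun h => hxy h.symm
  have hs := s_pos hx hy
  have hrs := r_le_s hx hy
  have hk : Real.log ‖x - y‖ ≤ Real.log ‖x - reflv y‖ := Real.log_le_log hr hrs
  rw [abs_of_nonpos (by linarith)]
  have hsle : ‖x - reflv y‖ ≤ 1 + 4 * R := by
    have h2 : ‖x - reflv y‖ ≤ ‖x‖ + ‖reflv y‖ := norm_sub_le _ _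
    have h3 : ‖y‖ ≤ ‖y - x‖ + ‖x‖ := by
      simpa using norm_add_le (y - x) x
    have h4 : ‖y - x‖ = ‖x - y‖ := norm_sub_rev _ _
    rw [norm_reflv] at h2
    linarith
  have := Real.log_le_log hs hsle
  linarith

lemma ker_far (hx : 0 < x 1) (hy : 0 < y 1) (hR : ‖x‖ ≤ R) (hR0 : 0 < R)
    (h1 : 1 < ‖x - y‖) :
    |Real.log ‖x - y‖ - Real.log ‖x - reflv y‖| ≤ 4 * (R + R ^ 2) * (1 + ‖x - y‖)⁻¹ := by
  have hr : (0:ℝ) < ‖x - y‖ := by linarith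
  have hs := s_pos hx hy
  have hrs := r_le_s hx hy
  have hsq := sub_reflv_sq x y
  have hk : Real.log ‖x - y‖ ≤ Real.log ‖x - reflv y‖ := Real.log_le_log hr hrs
  rw [abs_of_nonpos (by linarith)]
  have hx1 : x 1 ≤ R := le_trans (coord_le_norm x 1) hR
  have hy1 : y 1 ≤ ‖x - y‖ + R := by
    have h3 : ‖y‖ ≤ ‖y - x‖ + ‖x‖ := by simpa using norm_add_le (y - x) x
    have h4 : ‖y - x‖ = ‖x - y‖ := norm_sub_rev _ _
    have := coord_le_norm y 1
    linarith
  have key : Real.log ‖x - reflv y‖ - Real.log ‖x - y‖ ≤ 2 * (x 1 * y 1) / ‖x - y‖ ^ 2 := by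
    have e1 : Real.log ‖x - reflv y‖ - Real.log ‖x - y‖
        = (1/2) * (Real.log (‖x - reflv y‖ ^ 2) - Real.log (‖x - y‖ ^ 2)) := by
      rw [Real.log_pow, Real.log_pow]; push_cast; ring
    have e2 : Real.log (‖x - reflv y‖ ^ 2) - Real.log (‖x - y‖ ^ 2)
        = Real.log (‖x - reflv y‖ ^ 2 / ‖x - y‖ ^ 2) := by
      rw [Real.log_div (by positivity) (by positivity)]
    have e3 : Real.log (‖x - reflv y‖ ^ 2 / ‖x - y‖ ^ 2)
        ≤ ‖x - reflv y‖ ^ 2 / ‖x - y‖ ^ 2 - 1 :=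
      Real.log_le_sub_one_of_pos (by positivity)
    have e4 : ‖x - reflv y‖ ^ 2 / ‖x - y‖ ^ 2 - 1 = 4 * (x 1 * y 1) / ‖x - y‖ ^ 2 := by
      field_simp [hsq]
      linear_combination hsq
    rw [e1, e2]
    calc (1/2) * Real.log (‖x - reflv y‖ ^ 2 / ‖x - y‖ ^ 2)
        ≤ (1/2) * (‖x - reflv y‖ ^ 2 / ‖x - y‖ ^ 2 - 1) := by linarith
      _ = (1/2) * (4 * (x 1 * y 1) / ‖x - y‖ ^ 2) := by rw [e4]
      _ = 2 * (x 1 * y 1) / ‖x - y‖ ^ 2 := by ring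
  rw [neg_sub]
  refine key.trans ?_
  have hxy1 : x 1 * y 1 ≤ R * (‖x - y‖ + R) := by nlinarith
  have h2 : 4 * (R + R ^ 2) * (1 + ‖x - y‖)⁻¹ = 4 * (R + R ^ 2) / (1 + ‖x - y‖) := by ring
  rw [h2, div_le_div_iff₀ (by positivity) (by positivity)]
  have h5 : 2 * (x 1 * y 1) * (1 + ‖x - y‖) ≤ 2 * (R * (‖x - y‖ + R)) * (1 + ‖x - y‖) := by
    have : (0:ℝ) ≤ 1 + ‖x - y‖ := by linarith
    nlinarith
  refine h5.trans ?_
  nlinarith [mul_nonneg (mul_nonneg hR0.le (sub_nonneg.2 h1.le))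
      (by linarith : (0:ℝ) ≤ 2 * ‖x - y‖ + 1),
    mul_nonneg (sub_nonneg.2 h1.le) hr.le, h1, hR0]

lemma near_lintegral (x : Pt) :
    ∫⁻ y in closedBall x 1, ENNReal.ofReal (-Real.log ‖x - y‖) ∂volume
      ≤ ENNReal.ofReal (2 * Real.log 2) * volume (ball (0:Pt) 1) := by
  classical
  set V := volume (ball (0:Pt) 1) with hV
  set f : Pt → ℝ≥0∞ := fun y => ENNReal.ofReal (-Real.log ‖x - y‖) with hf
  set A : ℕ → Set Pt := fun n => {y | ‖x - y‖ ∈ Set.Ioc ((1/2:ℝ)^n / 2) ((1/2:ℝ)^n)} with hA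
  have hnorm_meas : Measurable fun y : Pt => ‖x - y‖ := (measurable_id.const_sub x).norm
  have hA_meas : ∀ n, MeasurableSet (A n) := fun n => hnorm_meas measurableSet_Ioc
  have hcover : closedBall x 1 ⊆ {x} ∪ ⋃ n, A n := by
    intro y hy
    rcases eq_or_ne y x with h | h
    · exact Or.inl (by simp [h])
    · refine Or.inr ?_
      have hr : 0 < ‖x - y‖ := by
        rw [norm_pos_iff, sub_ne_zero]; exact fun hh => h hh.symm
      have hr1 : ‖x - y‖ ≤ 1 := by
        have := mem_closedBall.1 hy
        rwa [dist_eq_norm, ← norm_sub_rev] at this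
      have hex : ∃ n : ℕ, (1/2:ℝ)^n / 2 < ‖x - y‖ := by
        obtain ⟨n, hn⟩ := exists_pow_lt_of_lt_one hr (by norm_num : (1/2:ℝ) < 1)
        exact ⟨n, by nlinarith [pow_pos (by norm_num : (0:ℝ) < 1/2) n]⟩
      have hmem : (1/2:ℝ)^(Nat.find hex) / 2 < ‖x - y‖ := Nat.find_spec hex
      have hup : ‖x - y‖ ≤ (1/2:ℝ)^(Nat.find hex) := by
        rcases Nat.eq_zero_or_pos (Nat.find hex) with h0 | h0
        · rw [h0]; simpa using hr1
        · obtain ⟨m, hm⟩ := Nat.exists_eq_succ_of_ne_zero h0.ne'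
          have := Nat.find_min hex (m := m) (by omega)
          push_neg at this
          rw [hm, pow_succ]
          calc ‖x - y‖ ≤ (1/2:ℝ)^m / 2 := this
            _ = (1/2:ℝ)^m * (1/2) := by ring
      exact Set.mem_iUnion.2 ⟨Nat.find hex, ⟨hmem, hup⟩⟩
  calc ∫⁻ y in closedBall x 1, f y ∂volume
      ≤ ∫⁻ y in {x} ∪ ⋃ n, A n, f y ∂volume := lintegral_mono_set hcover
    _ ≤ ∫⁻ y in {x}, f y ∂volume + ∫⁻ y in ⋃ n, A n, f y ∂volume := lintegral_union_le _ _ _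
    _ ≤ 0 + ∑' n, ∫⁻ y in A n, f y ∂volume := by
        gcongr
        · exact le_of_eq (setLIntegral_measure_zero _ _ (measure_singleton x))
        · exact lintegral_iUnion_le _ _
    _ ≤ ∑' n, ENNReal.ofReal (Real.log 2 * (1/2:ℝ)^n) * V := by
        rw [zero_add]
        refine ENNReal.tsum_le_tsum fun n => ?_
        have hb : ∀ y ∈ A n, f y ≤ ENNReal.ofReal (((n:ℝ)+1) * Real.log 2) := by
          intro y hy
          refine ENNReal.ofReal_le_ofReal ?_
          have h1 : (1/2:ℝ)^n/2 < ‖x - y‖ := hy.1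
          have hpos : (0:ℝ) < (1/2:ℝ)^n/2 := by positivity
          have hlog := Real.log_le_log hpos h1.le
          have hval : Real.log ((1/2:ℝ)^n/2) = -(((n:ℝ)+1) * Real.log 2) := by
            rw [Real.log_div (by positivity) (by norm_num), Real.log_pow, one_div,
              Real.log_inv]
            ring
          linarith [hval ▸ hlog]
        have hAsub : A n ⊆ closedBall x ((1/2:ℝ)^n) := by
          intro y hy
          rw [mem_closedBall, dist_eq_norm, ← norm_sub_rev]
          exact hy.2
        have hvol : volume (A n) ≤ ENNReal.ofReal (((1/2:ℝ)^n)^2) * V := by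
          refine (measure_mono hAsub).trans ?_
          rw [Measure.addHaar_closedBall volume x (by positivity), finrank_euclideanSpace_fin]
        calc ∫⁻ y in A n, f y ∂volume
            ≤ ∫⁻ _ in A n, ENNReal.ofReal (((n:ℝ)+1) * Real.log 2) ∂volume :=
              setLIntegral_mono' (hA_meas n) hb
          _ = ENNReal.ofReal (((n:ℝ)+1) * Real.log 2) * volume (A n) := setLIntegral_const _ _
          _ ≤ ENNReal.ofReal (((n:ℝ)+1) * Real.log 2) * (ENNReal.ofReal (((1/2:ℝ)^n)^2) * V) := by
              gcongr
          _ = ENNReal.ofReal (((n:ℝ)+1) * Real.log 2 * ((1/2:ℝ)^n)^2) * V := by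
              rw [← mul_assoc, ← ENNReal.ofReal_mul (by positivity)]
          _ ≤ ENNReal.ofReal (Real.log 2 * (1/2:ℝ)^n) * V := by
              refine mul_le_mul_left (ENNReal.ofReal_le_ofReal ?_) V
              have h2n : (n:ℝ) + 1 ≤ 2^n := by exact_mod_cast Nat.lt_two_pow_self (n := n)
              have hkey : ((n:ℝ)+1) * ((1/2:ℝ)^n)^2 ≤ (1/2:ℝ)^n := by
                have hprod : (2:ℝ)^n * (1/2:ℝ)^n = 1 := by
                  rw [← mul_pow]; norm_num
                nlinarith [pow_pos (by norm_num : (0:ℝ) < 1/2) n,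
                  pow_pos (by norm_num : (0:ℝ) < 2) n]
              nlinarith [Real.log_pos (by norm_num : (1:ℝ) < 2),
                pow_pos (by norm_num : (0:ℝ) < 1/2) n]
    _ = ENNReal.ofReal (2 * Real.log 2) * V := by
        rw [ENNReal.tsum_mul_right]
        congr 1
        rw [← ENNReal.ofReal_tsum_of_nonneg (fun n => by positivity)
          ((summable_geometric_of_lt_one (by norm_num) (by norm_num)).mul_left _)]
        congr 1
        rw [tsum_mul_left, tsum_geometric_of_lt_one (by norm_num) (by norm_num)]
        norm_num; ring

lemma far_piece (q : ℝ) (hq1 : 1 ≤ q) (hq2 : q < 2) :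
    ∃ Cq : ℝ, 0 < Cq ∧ ∀ (ω : Pt → ℝ), AEStronglyMeasurable ω μH →
      ∀ x : Pt, (∫⁻ y, ENNReal.ofReal ((1 + ‖x - y‖)⁻¹) * (‖ω y‖₊ : ℝ≥0∞) ∂μH)
        ≤ ENNReal.ofReal Cq * eLpNorm ω (ENNReal.ofReal q) μH := by
  rcases eq_or_lt_of_le hq1 with hq | hq
  · refine ⟨1, one_pos, fun ω hωm x => ?_⟩
    rw [ENNReal.ofReal_one, one_mul, ← hq, ENNReal.ofReal_one,
      eLpNorm_one_eq_lintegral_enorm]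
    refine lintegral_mono fun y => ?_
    refine mul_le_of_le_one_left zero_le ?_
    refine ENNReal.ofReal_le_one.2 ?_
    rw [inv_le_one_iff₀]
    right; linarith [norm_nonneg (x - y)]
  · set p := Real.conjExponent q with hp
    have hpq : p.HolderConjugate q := (Real.HolderConjugate.conjExponent hq).symm
    have hp1 : 1 < p := hpq.lt
    have hp2 : (2:ℝ) < p := by
      rw [hp, Real.conjExponent, lt_div_iff₀ (by linarith : (0:ℝ) < q - 1)]
      linarith
    set Iq := ∫⁻ z : Pt, ENNReal.ofReal ((1 + ‖z‖) ^ (-p)) ∂(volume : Measure Pt) with hIq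
    have hIq_fin : Iq < ⊤ := by
      rw [hIq]
      exact finite_integral_one_add_norm (by rw [finrank_euclideanSpace_fin]; exact hp2)
    have hIp_fin : Iq ^ (1/p) ≠ ⊤ :=
      (ENNReal.rpow_lt_top_of_nonneg (by positivity) hIq_fin.ne).ne
    refine ⟨(Iq ^ (1/p)).toReal + 1, by positivity, fun ω hωm x => ?_⟩
    have hf : Measurable fun y : Pt => ENNReal.ofReal ((1 + ‖x - y‖)⁻¹) :=
      (((measurable_id.const_sub x).norm.const_add 1).inv).ennreal_ofReal
    have hg : AEMeasurable (fun y : Pt => (‖ω y‖₊ : ℝ≥0∞)) μH := hωm.enorm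
    have hold := ENNReal.lintegral_mul_le_Lp_mul_Lq μH hpq hf.aemeasurable hg
    simp only [Pi.mul_apply] at hold
    refine hold.trans ?_
    have h1 : (∫⁻ y, ENNReal.ofReal ((1 + ‖x - y‖)⁻¹) ^ p ∂μH) ≤ Iq := by
      calc (∫⁻ y, ENNReal.ofReal ((1 + ‖x - y‖)⁻¹) ^ p ∂μH)
          ≤ ∫⁻ y, ENNReal.ofReal ((1 + ‖x - y‖)⁻¹) ^ p ∂(volume : Measure Pt) :=
            lintegral_mono' Measure.restrict_le_self le_rfl
        _ = ∫⁻ y, ENNReal.ofReal ((1 + ‖x - y‖) ^ (-p)) ∂(volume : Measure Pt) := by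
            refine lintegral_congr fun y => ?_
            rw [Real.rpow_neg (by positivity), ← Real.inv_rpow (by positivity),
              ← ENNReal.ofReal_rpow_of_nonneg (by positivity) (by linarith : (0:ℝ) ≤ p)]
        _ = Iq := by
            rw [hIq]
            exact (Measure.measurePreserving_sub_left volume x).lintegral_comp
              (((continuous_const.add continuous_norm).rpow_const
                (fun z : Pt => Or.inl (add_pos_of_pos_of_nonneg one_pos (norm_nonneg z)).ne')).measurable.ennreal_ofReal)
    have h2 : (∫⁻ a, (‖ω a‖₊ : ℝ≥0∞) ^ q ∂μH) ^ (1/q) = eLpNorm ω (ENNReal.ofReal q) μH := by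
      rw [eLpNorm_eq_lintegral_rpow_enorm_toReal (by simp [ENNReal.ofReal_eq_zero]; linarith)
        (by simp)]
      simp [ENNReal.toReal_ofReal (by linarith : (0:ℝ) ≤ q)]
      rfl
    rw [h2]
    refine mul_le_mul_left ?_ _
    calc (∫⁻ a, ENNReal.ofReal ((1 + ‖x - a‖)⁻¹) ^ p ∂μH) ^ (1/p)
        ≤ Iq ^ (1/p) := by gcongr
      _ = ENNReal.ofReal ((Iq ^ (1/p)).toReal) := (ENNReal.ofReal_toReal hIp_fin).symm
      _ ≤ ENNReal.ofReal ((Iq ^ (1/p)).toReal + 1) := ENNReal.ofReal_le_ofReal (by linarith)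

end streamAux
/-- **Local maximum estimate of the stream function.** For `ω ∈ L^∞(ℝ²₊) ∩ L^q(ℝ²₊)`,
`1 ≤ q < 2`, and every `R > 0` and `x ∈ ℝ²₊` with `|x| ≤ R`,
`|Ψ(x)| ≤ C_q (R + R²) ‖ω‖_{L^q} + C (1 + log(1 + 4R)) ‖ω‖_{L^∞}`
with `C` absolute and `C_q` depending only on `q`. -/
theorem stream_function_local_max_estimate :
    ∃ C : ℝ, 0 < C ∧
      ∀ q : ℝ, 1 ≤ q → q < 2 →
        ∃ Cq : ℝ, 0 < Cq ∧
          ∀ ω : Pt → ℝ, MemLp ω ⊤ μH → MemLp ω (ENNReal.ofReal q) μH →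
            ∀ R : ℝ, 0 < R → ∀ x ∈ UHP, ‖x‖ ≤ R →
              |streamFn ω x| ≤
                Cq * (R + R ^ 2) * (eLpNorm ω (ENNReal.ofReal q) μH).toReal +
                  C * (1 + Real.log (1 + 4 * R)) * (eLpNorm ω ⊤ μH).toReal := by
  classical
  set V : ℝ≥0∞ := volume (Metric.ball (0:Pt) 1) with hVdef
  have hV_fin : V ≠ ⊤ := measure_ball_lt_top.ne
  set K0 : ℝ≥0∞ := ENNReal.ofReal (2 * Real.log 2) * V with hK0def
  have hK0_fin : K0 ≠ ⊤ := ENNReal.mul_ne_top ENNReal.ofReal_ne_top hV_fin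
  refine ⟨V.toReal + K0.toReal + 1, by positivity, fun q hq1 hq2 => ?_⟩
  obtain ⟨Cq', hCq'_pos, hfar⟩ := far_piece q hq1 hq2
  refine ⟨4 * Cq', by positivity, fun ω hωtop hωq R hR x hxU hxR => ?_⟩
  have hx1 : 0 < x 1 := hxU
  have hμHeq : μH = volume.restrict UHP := rfl
  have hUm : MeasurableSet UHP := by
    have hm : Measurable fun y : Pt => y 1 :=
      (EuclideanSpace.proj (𝕜 := ℝ) (1 : Fin 2)).continuous.measurable
    exact measurableSet_lt measurable_const hm
  set Einf : ℝ≥0∞ := eLpNorm ω ⊤ μH with hEinfdef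
  set Eq' : ℝ≥0∞ := eLpNorm ω (ENNReal.ofReal q) μH with hEqdef
  have hEinf_fin : Einf ≠ ⊤ := hωtop.2.ne
  have hEq_fin : Eq' ≠ ⊤ := hωq.2.ne
  set c₂ : ℝ≥0∞ := ENNReal.ofReal (4 * (R + R ^ 2)) with hc2def
  set F₁ : Pt → ℝ≥0∞ := fun y => (Metric.closedBall x 1).indicator
    (fun y => ENNReal.ofReal (Real.log (1 + 4 * R) + -Real.log ‖x - y‖)) y with hF1def
  set f₂ : Pt → ℝ≥0∞ := fun y => ENNReal.ofReal ((1 + ‖x - y‖)⁻¹) with hf2def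
  have hF1_meas : Measurable F₁ := by
    refine Measurable.indicator ?_ measurableSet_closedBall
    exact (measurable_const.add ((measurable_id.const_sub x).norm.log).neg).ennreal_ofReal
  -- a.e. facts
  have hae_mem : ∀ᵐ y ∂μH, y ∈ UHP := by
    rw [hμHeq]; exact ae_restrict_mem hUm
  have hae_ne : ∀ᵐ y ∂μH, y ≠ x := by
    rw [ae_iff]
    have : {y : Pt | ¬ y ≠ x} = {x} := by ext y; simp
    rw [this]
    refine le_antisymm ?_ zero_le
    calc μH {x} ≤ volume {x} := by rw [hμHeq]; exact Measure.restrict_le_self _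
      _ = 0 := measure_singleton x
  have hae_bd : ∀ᵐ y ∂μH, (‖ω y‖₊ : ℝ≥0∞) ≤ Einf := by
    rw [hEinfdef, eLpNorm_exponent_top]
    exact enorm_ae_le_eLpNormEssSup ω μH
  -- pointwise bound
  have hpt : ∀ᵐ y ∂μH,
      ENNReal.ofReal ‖(Real.log ‖x - y‖ - Real.log ‖x - reflv y‖) * ω y‖
        ≤ F₁ y * Einf + c₂ * (f₂ y * (‖ω y‖₊ : ℝ≥0∞)) := by
    filter_upwards [hae_mem, hae_ne, hae_bd] with y hyU hyx hyb
    have hsplit : ENNReal.ofReal ‖(Real.log ‖x - y‖ - Real.log ‖x - reflv y‖) * ω y‖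
        = ENNReal.ofReal |Real.log ‖x - y‖ - Real.log ‖x - reflv y‖| * (‖ω y‖₊ : ℝ≥0∞) := by
      rw [norm_mul, ENNReal.ofReal_mul (norm_nonneg _), Real.norm_eq_abs,
        ofReal_norm, enorm_eq_nnnorm]
    rw [hsplit]
    by_cases hnear : ‖x - y‖ ≤ 1
    · have h5 := ker_near hx1 hyU hyx hxR hR hnear
      have hFy : F₁ y = ENNReal.ofReal (Real.log (1 + 4 * R) + -Real.log ‖x - y‖) := by
        rw [hF1def]
        exact Set.indicator_of_mem (by
          rw [Metric.mem_closedBall, dist_eq_norm, ← norm_sub_rev]; exact hnear) _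
      calc ENNReal.ofReal |Real.log ‖x - y‖ - Real.log ‖x - reflv y‖| * (‖ω y‖₊ : ℝ≥0∞)
          ≤ ENNReal.ofReal (Real.log (1 + 4 * R) + -Real.log ‖x - y‖) * Einf :=
            mul_le_mul' (ENNReal.ofReal_le_ofReal h5) hyb
        _ = F₁ y * Einf := by rw [hFy]
        _ ≤ F₁ y * Einf + c₂ * (f₂ y * (‖ω y‖₊ : ℝ≥0∞)) := le_self_add
    · push_neg at hnear
      have h5 := ker_far hx1 hyU hxR hR hnear
      calc ENNReal.ofReal |Real.log ‖x - y‖ - Real.log ‖x - reflv y‖| * (‖ω y‖₊ : ℝ≥0∞)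
          ≤ ENNReal.ofReal (4 * (R + R ^ 2) * (1 + ‖x - y‖)⁻¹) * (‖ω y‖₊ : ℝ≥0∞) :=
            mul_le_mul' (ENNReal.ofReal_le_ofReal h5) le_rfl
        _ = c₂ * (f₂ y * (‖ω y‖₊ : ℝ≥0∞)) := by
            rw [hc2def, hf2def, ENNReal.ofReal_mul (by positivity), mul_assoc]
        _ ≤ F₁ y * Einf + c₂ * (f₂ y * (‖ω y‖₊ : ℝ≥0∞)) := le_add_self
  -- the main lintegral bound
  set T : ℝ≥0∞ := (ENNReal.ofReal (Real.log (1 + 4 * R)) * V + K0) * Einf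
      + c₂ * (ENNReal.ofReal Cq' * Eq') with hTdef
  have hT_fin : T ≠ ⊤ := by
    refine ENNReal.add_ne_top.2 ⟨ENNReal.mul_ne_top (ENNReal.add_ne_top.2
      ⟨ENNReal.mul_ne_top ENNReal.ofReal_ne_top hV_fin, hK0_fin⟩) hEinf_fin,
      ENNReal.mul_ne_top ENNReal.ofReal_ne_top
        (ENNReal.mul_ne_top ENNReal.ofReal_ne_top hEq_fin)⟩
  have hL : (∫⁻ y, ENNReal.ofReal ‖(Real.log ‖x - y‖ - Real.log ‖x - reflv y‖) * ω y‖ ∂μH)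
      ≤ T := by
    calc (∫⁻ y, ENNReal.ofReal ‖(Real.log ‖x - y‖ - Real.log ‖x - reflv y‖) * ω y‖ ∂μH)
        ≤ ∫⁻ y, (F₁ y * Einf + c₂ * (f₂ y * (‖ω y‖₊ : ℝ≥0∞))) ∂μH := lintegral_mono_ae hpt
      _ = (∫⁻ y, F₁ y * Einf ∂μH) + ∫⁻ y, c₂ * (f₂ y * (‖ω y‖₊ : ℝ≥0∞)) ∂μH :=
          lintegral_add_left' ((hF1_meas.mul_const Einf).aemeasurable) _
      _ = (∫⁻ y, F₁ y ∂μH) * Einf + c₂ * ∫⁻ y, f₂ y * (‖ω y‖₊ : ℝ≥0∞) ∂μH := by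
          rw [lintegral_mul_const' Einf _ hEinf_fin, lintegral_const_mul' c₂ _
            ENNReal.ofReal_ne_top]
      _ ≤ (ENNReal.ofReal (Real.log (1 + 4 * R)) * V + K0) * Einf
          + c₂ * (ENNReal.ofReal Cq' * Eq') := by
          gcongr
          · -- near field
            calc (∫⁻ y, F₁ y ∂μH)
                ≤ ∫⁻ y, F₁ y ∂(volume : Measure Pt) := by
                  rw [hμHeq]; exact lintegral_mono' Measure.restrict_le_self le_rfl
              _ = ∫⁻ y in Metric.closedBall x 1,
                    ENNReal.ofReal (Real.log (1 + 4 * R) + -Real.log ‖x - y‖) ∂volume := by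
                  rw [hF1def, lintegral_indicator measurableSet_closedBall]
              _ ≤ ∫⁻ y in Metric.closedBall x 1,
                    (ENNReal.ofReal (Real.log (1 + 4 * R))
                      + ENNReal.ofReal (-Real.log ‖x - y‖)) ∂volume :=
                  lintegral_mono fun y => ENNReal.ofReal_add_le
              _ = ENNReal.ofReal (Real.log (1 + 4 * R)) * volume (Metric.closedBall x 1)
                  + ∫⁻ y in Metric.closedBall x 1, ENNReal.ofReal (-Real.log ‖x - y‖) ∂volume := by
                  rw [lintegral_add_left measurable_const, setLIntegral_const]
              _ ≤ ENNReal.ofReal (Real.log (1 + 4 * R)) * V + K0 := by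
                  gcongr
                  · rw [Measure.addHaar_closedBall volume x zero_le_one,
                      finrank_euclideanSpace_fin]
                    norm_num [hVdef]
                  · exact near_lintegral x
          · exact hfar ω hωtop.1 x
  -- convert to reals
  have hstep1 : |streamFn ω x|
      ≤ |∫ y in UHP, (Real.log ‖x - y‖ - Real.log ‖x - reflv y‖) * ω y| := by
    rw [streamFn, abs_mul, abs_of_nonneg (by positivity : (0:ℝ) ≤ (2 * π)⁻¹)]
    have hπ : (1:ℝ) ≤ 2 * π := by nlinarith [Real.pi_gt_three]
    have : (2 * π)⁻¹ ≤ 1 := by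
      rw [inv_le_one_iff₀]; right; exact hπ
    nlinarith [abs_nonneg (∫ y in UHP, (Real.log ‖x - y‖ - Real.log ‖x - reflv y‖) * ω y)]
  have hstep2 : |∫ y in UHP, (Real.log ‖x - y‖ - Real.log ‖x - reflv y‖) * ω y| ≤ T.toReal := by
    rw [← Real.norm_eq_abs]
    refine le_trans (norm_integral_le_lintegral_norm _) ?_
    exact ENNReal.toReal_mono hT_fin hL
  refine (hstep1.trans hstep2).trans ?_
  -- compute T.toReal and conclude
  have hlogR : (0:ℝ) ≤ Real.log (1 + 4 * R) := Real.log_nonneg (by linarith)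
  rw [hTdef, ENNReal.toReal_add (ENNReal.mul_ne_top (ENNReal.add_ne_top.2
      ⟨ENNReal.mul_ne_top ENNReal.ofReal_ne_top hV_fin, hK0_fin⟩) hEinf_fin)
      (ENNReal.mul_ne_top ENNReal.ofReal_ne_top
        (ENNReal.mul_ne_top ENNReal.ofReal_ne_top hEq_fin)),
    ENNReal.toReal_mul, ENNReal.toReal_mul, ENNReal.toReal_mul,
    ENNReal.toReal_add (ENNReal.mul_ne_top ENNReal.ofReal_ne_top hV_fin) hK0_fin,
    ENNReal.toReal_mul, ENNReal.toReal_ofReal hlogR,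
    ENNReal.toReal_ofReal (by positivity : (0:ℝ) ≤ 4 * (R + R ^ 2)),
    ENNReal.toReal_ofReal hCq'_pos.le]
  have h1 : (0:ℝ) ≤ V.toReal := ENNReal.toReal_nonneg
  have h2 : (0:ℝ) ≤ K0.toReal := ENNReal.toReal_nonneg
  have h3 : (0:ℝ) ≤ Einf.toReal := ENNReal.toReal_nonneg
  have h4 : (0:ℝ) ≤ Eq'.toReal := ENNReal.toReal_nonneg
  have hfar_eq : 4 * (R + R ^ 2) * (Cq' * Eq'.toReal)
      = 4 * Cq' * (R + R ^ 2) * Eq'.toReal := by ring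
  rw [hfar_eq]
  have hnear_le : (Real.log (1 + 4 * R) * V.toReal + K0.toReal) * Einf.toReal
      ≤ (V.toReal + K0.toReal + 1) * (1 + Real.log (1 + 4 * R)) * Einf.toReal := by
    refine mul_le_mul_of_nonneg_right ?_ h3
    nlinarith [mul_nonneg h2 hlogR, mul_nonneg h1 hlogR]
  linarith
end
end

section
/- Let 1 ≤ q < 2 and let ω ∈ L^∞(ℝ²₊) ∩ L^q(ℝ²₊). Define u(x) = (1/2π) ∫_{ℝ²₊} ((x−y)^⊥/|x−y|² − (x−ȳ)^⊥/|x−ȳ|²) ω(y) dy. Then there exists a constant C_q depending only on q such that for every x ∈ ℝ²₊, |u(x)| ≤ ‖ω‖_{L^∞(ℝ²₊)} + C_q ‖ω‖_{L^q(ℝ²₊)}. -/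
open MeasureTheory Real Filter
open scoped ENNReal NNReal Topology

noncomputable section

section VMEAux

open Set

lemma ofReal_norm_eq_coe_nnnorm {E : Type*} [SeminormedAddCommGroup E] (a : E) :
    ENNReal.ofReal ‖a‖ = (‖a‖₊ : ℝ≥0∞) := ENNReal.ofReal_eq_coe_nnreal _

lemma vme_norm_pt (z : Pt) : ‖z‖ = Real.sqrt (z 0 ^ 2 + z 1 ^ 2) := by
  rw [EuclideanSpace.norm_eq]; simp [Fin.sum_univ_two, sq]

lemma vme_norm_perp (z : Pt) : ‖perp z‖ = ‖z‖ := by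
  rw [vme_norm_pt, vme_norm_pt]
  show Real.sqrt ((z 1)^2 + (-(z 0))^2) = _
  ring_nf

lemma vme_measurableSet_UHP : MeasurableSet UHP := by
  have : UHP = (fun x : Pt => x 1) ⁻¹' Set.Ioi 0 := rfl
  rw [this]
  exact measurableSet_Ioi.preimage (by fun_prop)

lemma vme_norm_inv_smul_perp (z : Pt) : ‖(‖z‖ ^ 2)⁻¹ • perp z‖ = ‖z‖⁻¹ := by
  rw [norm_smul, vme_norm_perp]
  rcases eq_or_ne z 0 with rfl | hz
  · simp
  · have h : ‖z‖ ≠ 0 := norm_ne_zero_iff.mpr hz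
    rw [Real.norm_eq_abs, abs_of_nonneg (by positivity)]
    field_simp

lemma vme_norm_le_reflv {x y : Pt} (hx : x ∈ UHP) (hy : y ∈ UHP) :
    ‖x - y‖ ≤ ‖x - reflv y‖ := by
  have hx1 : 0 < x 1 := hx
  have hy1 : 0 < y 1 := hy
  rw [vme_norm_pt, vme_norm_pt]
  apply Real.sqrt_le_sqrt
  have h0 : (x - reflv y) 0 = x 0 - y 0 := rfl
  have h1 : (x - reflv y) 1 = x 1 + y 1 := by
    show x 1 - -(y 1) = _ ; ring
  have g0 : (x - y) 0 = x 0 - y 0 := rfl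
  have g1 : (x - y) 1 = x 1 - y 1 := rfl
  rw [h0, h1, g0, g1]
  nlinarith

lemma vme_bsK_norm_le (x y : Pt) :
    ‖bsK x y‖ ≤ (2 * π)⁻¹ * (‖x - y‖⁻¹ + ‖x - reflv y‖⁻¹) := by
  rw [bsK, norm_smul, Real.norm_eq_abs, abs_of_nonneg (by positivity : (0:ℝ) ≤ (2*π)⁻¹)]
  gcongr
  · exact (norm_sub_le _ _).trans
      (by rw [vme_norm_inv_smul_perp, vme_norm_inv_smul_perp])

lemma vme_bsK_enorm_le {x y : Pt} (hx : x ∈ UHP) (hy : y ∈ UHP) :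
    (‖bsK x y‖₊ : ℝ≥0∞) ≤ ENNReal.ofReal π⁻¹ * (‖x - y‖₊ : ℝ≥0∞)⁻¹ := by
  rcases eq_or_ne y x with rfl | hne
  · have h : ((‖(y:Pt) - y‖₊ : ℝ≥0∞))⁻¹ = ∞ := by simp
    rw [h, ENNReal.mul_top (ENNReal.ofReal_pos.mpr (by positivity)).ne']
    exact le_top
  · have hxy : x - y ≠ 0 := sub_ne_zero.mpr (Ne.symm hne)
    have hnxy : 0 < ‖x - y‖ := norm_pos_iff.mpr hxy
    have hb : ‖bsK x y‖ ≤ π⁻¹ * ‖x - y‖⁻¹ := by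
      refine (vme_bsK_norm_le x y).trans ?_
      have h2 : ‖x - reflv y‖⁻¹ ≤ ‖x - y‖⁻¹ :=
        inv_anti₀ hnxy (vme_norm_le_reflv hx hy)
      calc (2 * π)⁻¹ * (‖x - y‖⁻¹ + ‖x - reflv y‖⁻¹)
          ≤ (2 * π)⁻¹ * (‖x - y‖⁻¹ + ‖x - y‖⁻¹) := by gcongr
        _ = π⁻¹ * ‖x - y‖⁻¹ := by field_simp; ring
    calc ((‖bsK x y‖₊ : ℝ≥0∞)) = ENNReal.ofReal ‖bsK x y‖ := (ofReal_norm_eq_coe_nnnorm _).symm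
      _ ≤ ENNReal.ofReal (π⁻¹ * ‖x - y‖⁻¹) := ENNReal.ofReal_le_ofReal hb
      _ = ENNReal.ofReal π⁻¹ * ENNReal.ofReal ‖x - y‖⁻¹ := ENNReal.ofReal_mul (by positivity)
      _ = ENNReal.ofReal π⁻¹ * (‖x - y‖₊ : ℝ≥0∞)⁻¹ := by
          rw [ENNReal.ofReal_inv_of_pos hnxy, ofReal_norm_eq_coe_nnnorm]

lemma vme_vol_ball (c : Pt) (R : ℝ) (hR : 0 ≤ R) :
    volume (Metric.ball c R) = ENNReal.ofReal (π * R ^ 2) := by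
  rw [EuclideanSpace.volume_ball]
  have h2 : (Fintype.card (Fin 2)) = 2 := by simp
  rw [h2]
  have : Real.Gamma ((2:ℕ) / 2 + 1) = 1 := by
    rw [show ((2:ℕ):ℝ) / 2 + 1 = (2:ℝ) by norm_num]
    exact Real.Gamma_two
  rw [show ((2:ℕ):ℝ) / 2 + 1 = (2:ℝ) by norm_num] at *
  rw [this]
  rw [Real.sq_sqrt Real.pi_pos.le]
  rw [← ENNReal.ofReal_pow hR, ← ENNReal.ofReal_mul (by positivity)]
  ring_nf

lemma vme_lintegral_inv_norm_ball {R : ℝ} (hR : 0 < R) :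
    ∫⁻ z in Metric.ball (0:Pt) R, (‖z‖₊ : ℝ≥0∞)⁻¹ ≤ ENNReal.ofReal (2 * π * R) := by
  set μ := volume.restrict (Metric.ball (0:Pt) R) with hμ
  have hae : ∀ᵐ z ∂μ, (‖z‖₊ : ℝ≥0∞)⁻¹ = ENNReal.ofReal (‖z‖⁻¹) := by
    have h0 : ∀ᵐ z ∂μ, z ≠ (0:Pt) := by
      refine ae_restrict_of_ae ?_
      rw [ae_iff]
      simp only [not_not]
      have : {z : Pt | z = 0} = {(0:Pt)} := by ext; simp
      rw [this]
      exact measure_singleton _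
    filter_upwards [h0] with z hz
    have hn : 0 < ‖z‖ := norm_pos_iff.mpr hz
    rw [ENNReal.ofReal_inv_of_pos hn, ofReal_norm_eq_coe_nnnorm]
  rw [lintegral_congr_ae hae]
  rw [lintegral_eq_lintegral_meas_lt μ (Eventually.of_forall fun z => by positivity)
    (by fun_prop)]
  have hkey : ∀ t ∈ Ioi (0:ℝ), μ {a : Pt | t < ‖a‖⁻¹} ≤
      min (ENNReal.ofReal (π * R ^ 2)) (ENNReal.ofReal (π * (t⁻¹) ^ 2)) := by
    intro t ht
    have ht : (0:ℝ) < t := ht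
    have hsub : {a : Pt | t < ‖a‖⁻¹} ⊆ Metric.ball (0:Pt) t⁻¹ := by
      intro a ha
      have ha : t < ‖a‖⁻¹ := ha
      have hna : 0 < ‖a‖⁻¹ := lt_trans ht ha
      have hna' : 0 < ‖a‖ := inv_pos.mp hna
      rw [Metric.mem_ball, dist_zero_right]
      exact (lt_inv_comm₀ ht hna').mp ha
    refine le_min ?_ ?_
    · calc μ {a : Pt | t < ‖a‖⁻¹} ≤ μ univ := measure_mono (subset_univ _)
        _ ≤ volume (Metric.ball (0:Pt) R) := by
            rw [hμ, Measure.restrict_apply_univ]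
        _ = _ := vme_vol_ball _ _ hR.le
    · calc μ {a : Pt | t < ‖a‖⁻¹} ≤ volume (Metric.ball (0:Pt) t⁻¹) :=
          le_trans (le_trans (Measure.restrict_le_self _) le_rfl) (measure_mono hsub)
        _ = _ := vme_vol_ball _ _ (by positivity)
  calc ∫⁻ t in Ioi (0:ℝ), μ {a : Pt | t < ‖a‖⁻¹}
      ≤ ∫⁻ t in Ioi (0:ℝ),
          min (ENNReal.ofReal (π * R ^ 2)) (ENNReal.ofReal (π * (t⁻¹) ^ 2)) :=
        setLIntegral_mono' measurableSet_Ioi hkey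
    _ ≤ ENNReal.ofReal (π * R) + ENNReal.ofReal (π * R) := by
        rw [← Ioc_union_Ioi_eq_Ioi (le_of_lt (inv_pos.mpr hR))]
        refine le_trans (lintegral_union_le _ _ _) ?_
        gcongr
        · calc ∫⁻ t in Ioc (0:ℝ) R⁻¹,
              min (ENNReal.ofReal (π * R ^ 2)) (ENNReal.ofReal (π * (t⁻¹) ^ 2))
              ≤ ∫⁻ _ in Ioc (0:ℝ) R⁻¹, ENNReal.ofReal (π * R ^ 2) :=
                lintegral_mono fun t => min_le_left _ _
            _ = ENNReal.ofReal (π * R ^ 2) * volume (Ioc (0:ℝ) R⁻¹) := by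
                rw [setLIntegral_const]
            _ = ENNReal.ofReal (π * R ^ 2) * ENNReal.ofReal R⁻¹ := by
                rw [Real.volume_Ioc, sub_zero]
            _ = ENNReal.ofReal (π * R ^ 2 * R⁻¹) := by
                rw [← ENNReal.ofReal_mul (by positivity)]
            _ = ENNReal.ofReal (π * R) := by
                congr 1
                field_simp
        · have hc : (0:ℝ) < R⁻¹ := inv_pos.mpr hR
          calc ∫⁻ t in Ioi R⁻¹,
              min (ENNReal.ofReal (π * R ^ 2)) (ENNReal.ofReal (π * (t⁻¹) ^ 2))
              ≤ ∫⁻ t in Ioi R⁻¹, ENNReal.ofReal (π * t ^ (-2:ℝ)) := by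
                refine setLIntegral_mono' measurableSet_Ioi fun t ht => ?_
                refine le_trans (min_le_right _ _) (le_of_eq ?_)
                congr 1
                have ht0 : (0:ℝ) < t := lt_trans hc ht
                rw [Real.rpow_neg ht0.le, Real.rpow_two]
                rw [← inv_pow]
            _ = ENNReal.ofReal (∫ t in Ioi R⁻¹, π * t ^ (-2:ℝ)) := by
                rw [ofReal_integral_eq_lintegral_ofReal]
                · exact (integrableOn_Ioi_rpow_of_lt (by norm_num) hc).const_mul π
                · refine (ae_restrict_mem measurableSet_Ioi).mono fun t ht => ?_
                  have ht0 : (0:ℝ) < t := lt_trans hc ht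
                  positivity
            _ = ENNReal.ofReal (π * R) := by
                congr 1
                rw [integral_const_mul, integral_Ioi_rpow_of_lt (by norm_num) hc]
                rw [show (-2:ℝ) + 1 = -1 by norm_num, Real.rpow_neg_one, inv_inv]
                field_simp
    _ = ENNReal.ofReal (2 * π * R) := by
        rw [← ENNReal.ofReal_add (by positivity) (by positivity)]
        ring_nf

lemma vme_measurePreserving_subl (x : Pt) :
    MeasurePreserving (fun y : Pt => x - y) volume volume :=
  ⟨measurable_const.sub measurable_id, Measure.map_sub_left_eq_self volume x⟩

lemma vme_embedding_subl (x : Pt) : MeasurableEmbedding (fun y : Pt => x - y) :=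
  (MeasurableEquiv.subLeft x).measurableEmbedding

lemma vme_preimage_ball_subl (x : Pt) (R : ℝ) :
    (fun y : Pt => x - y) ⁻¹' (Metric.ball (0:Pt) R) = Metric.ball x R := by
  ext y
  simp [Metric.mem_ball, dist_eq_norm, norm_sub_rev]

lemma vme_lintegral_translate (x : Pt) (g : Pt → ℝ≥0∞) (s : Set Pt) :
    ∫⁻ y in (fun y : Pt => x - y) ⁻¹' s, g (x - y) = ∫⁻ z in s, g z :=
  (vme_measurePreserving_subl x).setLIntegral_comp_preimage_emb (vme_embedding_subl x) g s

lemma vme_far_finite {s : ℝ} (hs : 2 < s) :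
    ∫⁻ z in (Metric.ball (0:Pt) 2⁻¹)ᶜ,
      (ENNReal.ofReal π⁻¹ * (‖z‖₊ : ℝ≥0∞)⁻¹) ^ s < ∞ := by
  have hs0 : (0:ℝ) ≤ s := by linarith
  have hbound : ∀ z ∈ (Metric.ball (0:Pt) 2⁻¹)ᶜ,
      (ENNReal.ofReal π⁻¹ * (‖z‖₊ : ℝ≥0∞)⁻¹) ^ s ≤
        ENNReal.ofReal ((3 / π) ^ s) * ENNReal.ofReal ((1 + ‖z‖) ^ (-s)) := by
    intro z hz
    have hz : 2⁻¹ ≤ ‖z‖ := by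
      simpa [Metric.mem_ball, dist_zero_right] using hz
    have hz0 : 0 < ‖z‖ := lt_of_lt_of_le (by norm_num) hz
    have h1 : (‖z‖₊ : ℝ≥0∞)⁻¹ = ENNReal.ofReal ‖z‖⁻¹ := by
      rw [ENNReal.ofReal_inv_of_pos hz0, ofReal_norm_eq_coe_nnnorm]
    have h2 : ‖z‖⁻¹ ≤ 3 * (1 + ‖z‖)⁻¹ := by
      rw [inv_le_iff_one_le_mul₀ hz0]
      have : (1 + ‖z‖) ≤ 3 * ‖z‖ := by linarith
      calc (1:ℝ) = (1 + ‖z‖) * (1 + ‖z‖)⁻¹ := by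
            field_simp
        _ ≤ 3 * ‖z‖ * (1 + ‖z‖)⁻¹ := by gcongr
        _ = 3 * (1 + ‖z‖)⁻¹ * ‖z‖ := by ring
    calc (ENNReal.ofReal π⁻¹ * (‖z‖₊ : ℝ≥0∞)⁻¹) ^ s
        ≤ (ENNReal.ofReal π⁻¹ * ENNReal.ofReal (3 * (1 + ‖z‖)⁻¹)) ^ s := by
          gcongr
          rw [h1]
          exact ENNReal.ofReal_le_ofReal h2
      _ = ENNReal.ofReal (π⁻¹ * (3 * (1 + ‖z‖)⁻¹)) ^ s := by
          rw [← ENNReal.ofReal_mul (by positivity)]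
      _ = ENNReal.ofReal ((π⁻¹ * (3 * (1 + ‖z‖)⁻¹)) ^ s) := by
          rw [← ENNReal.ofReal_rpow_of_nonneg (by positivity) hs0]
      _ = ENNReal.ofReal ((3 / π) ^ s * (1 + ‖z‖) ^ (-s)) := by
          congr 1
          rw [Real.rpow_neg (by positivity), ← Real.inv_rpow (by positivity),
            ← Real.mul_rpow (by positivity) (by positivity)]
          congr 1
          field_simp
      _ = _ := ENNReal.ofReal_mul (by positivity)
  calc ∫⁻ z in (Metric.ball (0:Pt) 2⁻¹)ᶜ, (ENNReal.ofReal π⁻¹ * (‖z‖₊ : ℝ≥0∞)⁻¹) ^ s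
      ≤ ∫⁻ z in (Metric.ball (0:Pt) 2⁻¹)ᶜ,
          ENNReal.ofReal ((3 / π) ^ s) * ENNReal.ofReal ((1 + ‖z‖) ^ (-s)) :=
        setLIntegral_mono' measurableSet_ball.compl hbound
    _ ≤ ∫⁻ z : Pt, ENNReal.ofReal ((3 / π) ^ s) * ENNReal.ofReal ((1 + ‖z‖) ^ (-s)) :=
        setLIntegral_le_lintegral _ _
    _ = ENNReal.ofReal ((3 / π) ^ s) * ∫⁻ z : Pt, ENNReal.ofReal ((1 + ‖z‖) ^ (-s)) :=
        lintegral_const_mul' _ _ ENNReal.ofReal_ne_top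
    _ < ∞ := by
        refine ENNReal.mul_lt_top ENNReal.ofReal_lt_top ?_
        exact finite_integral_one_add_norm (by simp; exact hs)

lemma vme_master (ω : Pt → ℝ) (hω : MemLp ω ⊤ μH) {x : Pt} (hx : x ∈ UHP) (Cfar : ℝ≥0∞)
    (hfar : ∫⁻ y in (Metric.ball x 2⁻¹)ᶜ ∩ UHP,
        (‖ω y‖₊ : ℝ≥0∞) * (ENNReal.ofReal π⁻¹ * (‖x - y‖₊ : ℝ≥0∞)⁻¹) ≤ Cfar) :
    (‖bs ω x‖₊ : ℝ≥0∞) ≤ eLpNorm ω ⊤ μH + Cfar := by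
  set S := Metric.ball x 2⁻¹ with hS
  have hSm : MeasurableSet S := measurableSet_ball
  have hΛ : eLpNormEssSup ω μH ≠ ∞ := by
    have := hω.2
    rwa [eLpNorm_exponent_top, lt_top_iff_ne_top] at this
  have h1 : (‖bs ω x‖₊ : ℝ≥0∞) ≤ ∫⁻ y, (‖ω y‖₊ : ℝ≥0∞) * (‖bsK x y‖₊ : ℝ≥0∞) ∂μH := by
    have hbs : bs ω x = ∫ y, ω y • bsK x y ∂μH := rfl
    rw [hbs]
    refine le_trans (enorm_integral_le_lintegral_enorm _) (le_of_eq ?_)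
    refine lintegral_congr fun y => ?_
    exact enorm_smul _ _
  rw [← lintegral_add_compl (fun y => (‖ω y‖₊ : ℝ≥0∞) * (‖bsK x y‖₊ : ℝ≥0∞)) hSm] at h1
  have hres : ∀ T : Set Pt, MeasurableSet T → μH.restrict T = volume.restrict (T ∩ UHP) := by
    intro T hT
    rw [μH, Measure.restrict_restrict hT]
  have hnear : ∫⁻ y in S, (‖ω y‖₊ : ℝ≥0∞) * (‖bsK x y‖₊ : ℝ≥0∞) ∂μH ≤ eLpNorm ω ⊤ μH := by
    have step1 : ∫⁻ y in S, (‖ω y‖₊ : ℝ≥0∞) * (‖bsK x y‖₊ : ℝ≥0∞) ∂μH ≤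
        eLpNormEssSup ω μH * ∫⁻ y in S, (‖bsK x y‖₊ : ℝ≥0∞) ∂μH := by
      rw [← lintegral_const_mul' _ _ hΛ]
      refine lintegral_mono_ae ?_
      filter_upwards [ae_restrict_of_ae (enorm_ae_le_eLpNormEssSup ω μH)] with y hy
      exact mul_le_mul_left hy _
    have step2 : ∫⁻ y in S, (‖bsK x y‖₊ : ℝ≥0∞) ∂μH ≤ ENNReal.ofReal π⁻¹ *
        ∫⁻ z in Metric.ball (0:Pt) 2⁻¹, (‖z‖₊ : ℝ≥0∞)⁻¹ := by
      rw [hres S hSm]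
      calc ∫⁻ y in S ∩ UHP, (‖bsK x y‖₊ : ℝ≥0∞)
          ≤ ∫⁻ y in S ∩ UHP, ENNReal.ofReal π⁻¹ * (‖x - y‖₊ : ℝ≥0∞)⁻¹ :=
            setLIntegral_mono' (hSm.inter vme_measurableSet_UHP) fun y hy =>
              vme_bsK_enorm_le hx hy.2
        _ ≤ ∫⁻ y in S, ENNReal.ofReal π⁻¹ * (‖x - y‖₊ : ℝ≥0∞)⁻¹ :=
            lintegral_mono_set inter_subset_left
        _ = ENNReal.ofReal π⁻¹ * ∫⁻ y in S, (‖x - y‖₊ : ℝ≥0∞)⁻¹ :=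
            lintegral_const_mul' _ _ ENNReal.ofReal_ne_top
        _ = ENNReal.ofReal π⁻¹ * ∫⁻ z in Metric.ball (0:Pt) 2⁻¹, (‖z‖₊ : ℝ≥0∞)⁻¹ := by
            rw [hS, ← vme_preimage_ball_subl x 2⁻¹,
              vme_lintegral_translate x (fun z => (‖z‖₊ : ℝ≥0∞)⁻¹) (Metric.ball (0:Pt) 2⁻¹)]
    calc ∫⁻ y in S, (‖ω y‖₊ : ℝ≥0∞) * (‖bsK x y‖₊ : ℝ≥0∞) ∂μH
        ≤ eLpNormEssSup ω μH * (ENNReal.ofReal π⁻¹ *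
            ∫⁻ z in Metric.ball (0:Pt) 2⁻¹, (‖z‖₊ : ℝ≥0∞)⁻¹) :=
          le_trans step1 (mul_le_mul_right step2 _)
      _ ≤ eLpNormEssSup ω μH * (ENNReal.ofReal π⁻¹ * ENNReal.ofReal (2 * π * 2⁻¹)) := by
          gcongr
          exact vme_lintegral_inv_norm_ball (by norm_num)
      _ = eLpNormEssSup ω μH := by
          rw [← ENNReal.ofReal_mul (by positivity)]
          rw [show π⁻¹ * (2 * π * 2⁻¹) = 1 by field_simp]
          simp
      _ = eLpNorm ω ⊤ μH := by rw [eLpNorm_exponent_top]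
  have hfar' : ∫⁻ y in Sᶜ, (‖ω y‖₊ : ℝ≥0∞) * (‖bsK x y‖₊ : ℝ≥0∞) ∂μH ≤ Cfar := by
    rw [hres Sᶜ hSm.compl]
    refine le_trans ?_ hfar
    refine setLIntegral_mono' (hSm.compl.inter vme_measurableSet_UHP) fun y hy => ?_
    exact mul_le_mul_right (vme_bsK_enorm_le hx hy.2) _
  calc (‖bs ω x‖₊ : ℝ≥0∞) ≤ _ := h1
    _ ≤ eLpNorm ω ⊤ μH + Cfar := add_le_add hnear hfar'

end VMEAux

/-- **Maximum estimate of the velocity.** For `ω ∈ L^∞(ℝ²₊) ∩ L^q(ℝ²₊)`, `1 ≤ q < 2`,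
the Biot–Savart velocity satisfies `|u(x)| ≤ ‖ω‖_{L^∞} + C_q ‖ω‖_{L^q}` for all `x ∈ ℝ²₊`. -/
theorem velocity_max_estimate
    (q : ℝ) (hq1 : 1 ≤ q) (hq2 : q < 2) :
    ∃ Cq : ℝ, 0 < Cq ∧
      ∀ ω : Pt → ℝ, MemLp ω ⊤ μH → MemLp ω (ENNReal.ofReal q) μH →
        ∀ x ∈ UHP,
          ‖bs ω x‖ ≤ (eLpNorm ω ⊤ μH).toReal +
            Cq * (eLpNorm ω (ENNReal.ofReal q) μH).toReal := by
  have hnorm_eq : ∀ (v : Pt), ‖v‖ = ((‖v‖₊ : ℝ≥0∞)).toReal := by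
    intro v; simp
  rcases eq_or_lt_of_le hq1 with h1 | h1
  · -- q = 1
    subst h1
    rw [ENNReal.ofReal_one]
    refine ⟨1, one_pos, fun ω hwI hω1 x hx => ?_⟩
    set c : ℝ≥0∞ := ENNReal.ofReal π⁻¹ * 2 with hc
    have hfar : ∫⁻ y in (Metric.ball x 2⁻¹)ᶜ ∩ UHP,
        (‖ω y‖₊ : ℝ≥0∞) * (ENNReal.ofReal π⁻¹ * (‖x - y‖₊ : ℝ≥0∞)⁻¹) ≤
          c * eLpNorm ω 1 μH := by
      have hstep : ∫⁻ y in (Metric.ball x 2⁻¹)ᶜ ∩ UHP,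
          (‖ω y‖₊ : ℝ≥0∞) * (ENNReal.ofReal π⁻¹ * (‖x - y‖₊ : ℝ≥0∞)⁻¹) ≤
          ∫⁻ y in (Metric.ball x 2⁻¹)ᶜ ∩ UHP, c * (‖ω y‖₊ : ℝ≥0∞) := by
        refine setLIntegral_mono' (measurableSet_ball.compl.inter vme_measurableSet_UHP)
          fun y hy => ?_
        have hdist : (2:ℝ)⁻¹ ≤ ‖x - y‖ := by
          have h := hy.1
          rw [Set.mem_compl_iff, Metric.mem_ball, not_lt, dist_eq_norm, norm_sub_rev] at h
          exact h
        have hinv : (‖x - y‖₊ : ℝ≥0∞)⁻¹ ≤ 2 := by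
          have h2 : ((2:ℝ≥0∞))⁻¹ ≤ (‖x - y‖₊ : ℝ≥0∞) := by
            have h3 : ((2:ℝ≥0∞))⁻¹ = ENNReal.ofReal 2⁻¹ := by
              rw [ENNReal.ofReal_inv_of_pos (by norm_num)]
              norm_num
            rw [h3, ← ofReal_norm_eq_coe_nnnorm]
            exact ENNReal.ofReal_le_ofReal hdist
          calc (‖x - y‖₊ : ℝ≥0∞)⁻¹ ≤ ((2:ℝ≥0∞)⁻¹)⁻¹ := ENNReal.inv_le_inv.mpr h2
            _ = 2 := inv_inv _
        calc (‖ω y‖₊ : ℝ≥0∞) * (ENNReal.ofReal π⁻¹ * (‖x - y‖₊ : ℝ≥0∞)⁻¹)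
            ≤ (‖ω y‖₊ : ℝ≥0∞) * (ENNReal.ofReal π⁻¹ * 2) := by gcongr
          _ = c * (‖ω y‖₊ : ℝ≥0∞) := by rw [hc]; ring
      refine hstep.trans ?_
      rw [lintegral_const_mul' _ _ (by finiteness)]
      refine mul_le_mul_right ?_ _
      rw [eLpNorm_one_eq_lintegral_enorm]
      have : volume.restrict ((Metric.ball x 2⁻¹)ᶜ ∩ UHP) ≤ μH := by
        rw [μH, ← Measure.restrict_restrict measurableSet_ball.compl]
        exact Measure.restrict_le_self
      exact lintegral_mono' this le_rfl
    have hmain := vme_master ω hwI hx _ hfar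
    have hfin : eLpNorm ω ⊤ μH + c * eLpNorm ω 1 μH ≠ ∞ := by
      refine ENNReal.add_ne_top.mpr ⟨hwI.2.ne, ?_⟩
      exact (ENNReal.mul_lt_top (by finiteness) hω1.2).ne
    rw [hnorm_eq]
    refine le_trans (ENNReal.toReal_mono hfin hmain) ?_
    rw [ENNReal.toReal_add (hwI.2.ne) (ENNReal.mul_lt_top (by finiteness) hω1.2).ne]
    gcongr
    rw [ENNReal.toReal_mul, hc, ENNReal.toReal_mul, ENNReal.toReal_ofReal (by positivity)]
    have hπ : π⁻¹ * (2:ℝ≥0∞).toReal ≤ 1 := by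
      have h3 := Real.pi_gt_three
      rw [ENNReal.toReal_ofNat]
      rw [inv_mul_le_iff₀ (by positivity)]
      linarith
    nlinarith [ENNReal.toReal_nonneg (a := eLpNorm ω 1 μH), hπ,
      mul_le_of_le_one_left (ENNReal.toReal_nonneg (a := eLpNorm ω 1 μH)) hπ]
  · -- 1 < q
    set q' := Real.conjExponent q with hq'def
    have hconj : q.HolderConjugate q' := Real.HolderConjugate.conjExponent h1
    have hq'2 : 2 < q' := by
      rw [hq'def, Real.conjExponent, lt_div_iff₀ (by linarith)]
      linarith
    set Kfar : ℝ≥0∞ := ∫⁻ z in (Metric.ball (0:Pt) 2⁻¹)ᶜ,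
      (ENNReal.ofReal π⁻¹ * (‖z‖₊ : ℝ≥0∞)⁻¹) ^ q' with hKfar
    have hKfin : Kfar < ∞ := vme_far_finite hq'2
    have hKpow_fin : Kfar ^ (1 / q') ≠ ∞ :=
      (ENNReal.rpow_lt_top_of_nonneg (by positivity) hKfin.ne).ne
    refine ⟨(Kfar ^ (1 / q')).toReal + 1, by positivity, fun ω hwI hωq x hx => ?_⟩
    set p := ENNReal.ofReal q with hp
    have hp0 : p ≠ 0 := by
      rw [hp]; simp only [ne_eq, ENNReal.ofReal_eq_zero, not_le]; linarith
    have hpt : p ≠ ∞ := ENNReal.ofReal_ne_top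
    have hptoReal : p.toReal = q := ENNReal.toReal_ofReal (by linarith)
    have hfar : ∫⁻ y in (Metric.ball x 2⁻¹)ᶜ ∩ UHP,
        (‖ω y‖₊ : ℝ≥0∞) * (ENNReal.ofReal π⁻¹ * (‖x - y‖₊ : ℝ≥0∞)⁻¹) ≤
          eLpNorm ω p μH * Kfar ^ (1 / q') := by
      set μ' := volume.restrict ((Metric.ball x 2⁻¹)ᶜ ∩ UHP) with hμ'
      have hμ'le : μ' ≤ μH := by
        rw [hμ', μH, ← Measure.restrict_restrict measurableSet_ball.compl]
        exact Measure.restrict_le_self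
      have hωmeas : AEMeasurable (fun y => (‖ω y‖₊ : ℝ≥0∞)) μ' :=
        (hwI.aestronglyMeasurable.mono_measure hμ'le).enorm
      have hGmeas : Measurable (fun y : Pt =>
          ENNReal.ofReal π⁻¹ * (‖x - y‖₊ : ℝ≥0∞)⁻¹) := by
        refine Measurable.const_mul ?_ _
        exact ((measurable_const.sub measurable_id).nnnorm.coe_nnreal_ennreal).inv
      have hH := ENNReal.lintegral_mul_le_Lp_mul_Lq μ' hconj hωmeas hGmeas.aemeasurable
      refine le_trans (le_of_eq (lintegral_congr fun y => rfl)) (hH.trans ?_)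
      refine mul_le_mul ?_ ?_ zero_le zero_le
      · rw [eLpNorm_eq_lintegral_rpow_enorm_toReal hp0 hpt, hptoReal]
        refine ENNReal.rpow_le_rpow ?_ (by positivity)
        exact lintegral_mono' hμ'le le_rfl
      · refine ENNReal.rpow_le_rpow ?_ (by positivity)
        calc ∫⁻ a, (ENNReal.ofReal π⁻¹ * (‖x - a‖₊ : ℝ≥0∞)⁻¹) ^ q' ∂μ'
            ≤ ∫⁻ a in (Metric.ball x 2⁻¹)ᶜ,
                (ENNReal.ofReal π⁻¹ * (‖x - a‖₊ : ℝ≥0∞)⁻¹) ^ q' := by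
              rw [hμ']
              exact lintegral_mono' (Measure.restrict_mono Set.inter_subset_left le_rfl) le_rfl
          _ = Kfar := by
              rw [hKfar, ← vme_preimage_ball_subl x 2⁻¹, ← Set.preimage_compl,
                vme_lintegral_translate x
                  (fun z => (ENNReal.ofReal π⁻¹ * (‖z‖₊ : ℝ≥0∞)⁻¹) ^ q') _]
    have hmain := vme_master ω hwI hx _ hfar
    have hfarfin : eLpNorm ω p μH * Kfar ^ (1 / q') ≠ ∞ :=
      (ENNReal.mul_lt_top hωq.2 (lt_top_iff_ne_top.mpr hKpow_fin)).ne
    have hfin : eLpNorm ω ⊤ μH + eLpNorm ω p μH * Kfar ^ (1 / q') ≠ ∞ :=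
      ENNReal.add_ne_top.mpr ⟨hwI.2.ne, hfarfin⟩
    rw [hnorm_eq]
    refine le_trans (ENNReal.toReal_mono hfin hmain) ?_
    rw [ENNReal.toReal_add (hwI.2.ne) hfarfin, ENNReal.toReal_mul]
    have h0 : (0:ℝ) ≤ (eLpNorm ω p μH).toReal := ENNReal.toReal_nonneg
    have h0' : (0:ℝ) ≤ (Kfar ^ (1 / q')).toReal := ENNReal.toReal_nonneg
    nlinarith
end
end
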